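/- Fix complex numbers B₁,B₄,B₅,C₃,C₄,F₁,F₄,F₅,G₃,G₄. Let g be the 8-dimensional real Lie algebra whose complexification has basis Z₁,Z₂,Z₃,Z₄,Z̄₁,Z̄₂,Z̄₃,Z̄₄ (with conjugation exchanging Z_j and Z̄_j) and whose only nonzero brackets, up to antisymmetry and conjugation, are [Z₁,Z₂] = −B₁Z₃ − F₁Z₄, [Z₁,Z̄₁] = −B₄Z₃ − F₄Z₄ + B̄₄Z̄₃ + F̄₄Z̄₄, [Z₁,Z̄₂] = −B₅Z₃ − F₅Z₄ + C̄₃Z̄₃ + Ḡ₃Z̄₄, [Z₂,Z̄₁] = −C₃Z₃ − G₃Z₄ + B̄₅Z̄₃ + F̄₅Z̄₄, [Z₂,Z̄₂] = −C₄Z₃ − G₄Z₄ + C̄₄Z̄₃ + Ḡ₄Z̄₄ (these define a 2-step nilpotent real Lie algebra, with integrable complex structure J acting as multiplication by i, i.e. JZ_j = iZ_j). Let ⟨·,·⟩ be the J-compatible inner product on g for which {Z₁,Z₂,Z₃,Z₄} is a unitary basis. Then (J,⟨·,·⟩) is SKT (its Bismut torsion 3-form is closed) if and only if |B₁|² + |F₁|²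 + |G₃|² + |B₅|² + |C₃|² + |F₅|² = 2 Re( C₄ B̄₄ + F₄ Ḡ₄ ). -/

import Mathlib

/-- The Bismut torsion 3-form of a complex structure `J` and a `J`-compatible inner
product `B` on a Lie algebra: `c(X,Y,Z) = −⟨[JX,JY],Z⟩ − ⟨[JY,JZ],X⟩ − ⟨[JZ,JX],Y⟩`
(here written for the multilinear extension of the data to the complexification). -/
def bismutC {g R : Type*} [LieRing g] [Ring R] (B : g → g → R) (J : g → g)
    (X Y Z : g) : R :=
  - B ⁅J X, J Y⁆ Z - B ⁅J Y, J Z⁆ X - B ⁅J Z, J X⁆ Y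

/-- The Chevalley–Eilenberg differential of a 3-form `c` on a Lie algebra. -/
def dC {g R : Type*} [LieRing g] [Ring R] (c : g → g → g → R) (X Y Z W : g) : R :=
  - c ⁅X, Y⁆ Z W + c ⁅X, Z⁆ Y W - c ⁅X, W⁆ Y Z
    - c ⁅Y, Z⁆ X W + c ⁅Y, W⁆ X Z - c ⁅Z, W⁆ X Y

/-! Every bracket of `g` lies in the span of `Z₃, Z₄, Z̄₃, Z̄₄`, which is central and `J`-stable;
hence `dc` vanishes as soon as one of its arguments lies in that span. Since `dc` is an
alternating 4-form and only `Z₁, Z₂, Z̄₁, Z̄₂` lie outside the span, `dc = 0` iff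
`dc(Z₁, Z₂, Z̄₁, Z̄₂) = 0`, and a direct computation gives
`dc(Z₁, Z₂, Z̄₁, Z̄₂) = 2 Re(C₄ B̄₄ + F₄ Ḡ₄) - (|B₁|² + |F₁|² + |G₃|² + |B₅|² + |C₃|² + |F₅|²)`. -/

open LieAlgebra

section

variable {R L : Type*} [CommRing R] [LieRing L] [LieAlgebra R L]
  (B : L →ₗ[R] L →ₗ[R] R) (J : L →ₗ[R] L)

lemma bismutC_zero_left (Y Z : L) : bismutC (fun a b => B a b) J 0 Y Z = 0 := by
  simp [bismutC]

lemma bismutC_neg_left (X Y Z : L) :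
    bismutC (fun a b => B a b) J (-X) Y Z = -bismutC (fun a b => B a b) J X Y Z := by
  simp only [bismutC, map_neg, neg_lie, lie_neg, LinearMap.neg_apply]
  ring

lemma bismutC_swap_right (X Y Z : L) :
    bismutC (fun a b => B a b) J X Z Y = -bismutC (fun a b => B a b) J X Y Z := by
  simp only [bismutC, ← lie_skew (J Z) (J Y), ← lie_skew (J Y) (J X), ← lie_skew (J X) (J Z),
    map_neg, LinearMap.neg_apply]
  ring

lemma bismutC_self_right (X Y : L) : bismutC (fun a b => B a b) J X Y Y = 0 := by
  simp only [bismutC, lie_self, ← lie_skew (J Y) (J X), map_neg, map_zero, LinearMap.neg_apply,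
    LinearMap.zero_apply]
  ring

def dBismutC : L [⋀^Fin 4]→ₗ[R] R where
  toFun v := dC (bismutC (fun a b => B a b) J) (v 0) (v 1) (v 2) (v 3)
  map_update_add' := by
    intro inst m i x y
    -- `simp` proves `i ≠ j` by `decide`, which the kernel accepts only for the standard instance.
    obtain rfl : inst = instDecidableEqFin 4 := Subsingleton.elim _ _
    fin_cases i <;> simp [dC, bismutC, Function.update_of_ne] <;> ring
  map_update_smul' := by
    intro inst m i a x
    obtain rfl : inst = instDecidableEqFin 4 := Subsingleton.elim _ _
    fin_cases i <;> simp [dC, bismutC, Function.update_of_ne] <;> ring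
  map_eq_zero_of_eq' v i j hij hne := by
    -- Once the two equal arguments are identified, orienting every bracket and every pair of
    -- trailing arguments of `bismutC` increasingly makes the six terms cancel in pairs.
    fin_cases i <;> fin_cases j <;> simp at hne <;> simp at hij <;>
      simp only [dC, hij, ← lie_skew (v 1) (v 0), ← lie_skew (v 2) (v 0),
        ← lie_skew (v 2) (v 1), ← lie_skew (v 3) (v 1), ← lie_skew (v 3) (v 2), lie_self,
        bismutC_zero_left, bismutC_neg_left, bismutC_self_right,
        bismutC_swap_right _ _ _ (v 1) (v 0), bismutC_swap_right _ _ _ (v 2) (v 0),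
        bismutC_swap_right _ _ _ (v 3) (v 0), bismutC_swap_right _ _ _ (v 2) (v 1),
        bismutC_swap_right _ _ _ (v 3) (v 1), bismutC_swap_right _ _ _ (v 3) (v 2)] <;>
      ring

lemma dBismutC_apply (v : Fin 4 → L) :
    dBismutC B J v = dC (bismutC (fun a b => B a b) J) (v 0) (v 1) (v 2) (v 3) := rfl

lemma forall_dC_bismutC_eq_zero_iff :
    (∀ X Y Z W : L, dC (bismutC (fun a b => B a b) J) X Y Z W = 0) ↔ dBismutC B J = 0 :=
  ⟨fun h => AlternatingMap.ext fun v => h _ _ _ _,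
    fun h X Y Z W => by simpa [dBismutC_apply] using DFunLike.congr_fun h ![X, Y, Z, W]⟩

variable {B J}

lemma dC_bismutC_eq_zero_of_mem_center (hJ : ∀ x y : L, J ⁅x, y⁆ ∈ center R L) {W : L}
    (hW : W ∈ center R L) (hJW : J W ∈ center R L) (X Y Z : L) :
    dC (bismutC (fun a b => B a b) J) X Y Z W = 0 := by
  have central_right : ∀ {u}, u ∈ center R L → ∀ x : L, ⁅x, u⁆ = 0 := fun hu =>
    (LieModule.mem_maxTrivSubmodule _ _ _ _).1 hu
  have central_left : ∀ {u}, u ∈ center R L → ∀ x : L, ⁅u, x⁆ = 0 := fun hu x => by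
    rw [← lie_skew, central_right hu, neg_zero]
  simp [dC, bismutC, central_right hW, central_right hJW, central_left hJW,
    central_left (hJ _ _)]

lemma dBismutC_eq_zero_of_mem_center (hJ : ∀ x y : L, J ⁅x, y⁆ ∈ center R L) (v : Fin 4 → L)
    (i : Fin 4) (hv : v i ∈ center R L) (hJv : J (v i) ∈ center R L) : dBismutC B J v = 0 := by
  have hlast : dBismutC B J (v ∘ Equiv.swap i 3) = 0 :=
    dC_bismutC_eq_zero_of_mem_center hJ (by simpa using hv) (by simpa using hJv) _ _ _
  rcases eq_or_ne i 3 with rfl | hi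
  · simpa using hlast
  · rwa [AlternatingMap.map_swap _ _ hi, neg_eq_zero] at hlast

lemma Module.Basis.mem_center_of_forall_lie_eq_zero {ι : Type*} (b : Module.Basis ι R L) {u : L}
    (h : ∀ i, ⁅u, b i⁆ = 0) : u ∈ center R L := by
  have had : ad R L u = 0 := b.ext h
  rw [LieModule.mem_maxTrivSubmodule]
  intro x
  rw [← lie_skew, ← ad_apply (R := R), had, LinearMap.zero_apply, neg_zero]

lemma Module.Basis.lie_mem_of_forall_lie_mem {ι : Type*} [Fintype ι] (b : Module.Basis ι R L)
    {S : Submodule R L} (h : ∀ i j, ⁅b i, b j⁆ ∈ S) (x y : L) : ⁅x, y⁆ ∈ S := by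
  rw [← b.sum_repr x, ← b.sum_repr y, sum_lie]
  refine Submodule.sum_mem _ fun i _ => ?_
  rw [smul_lie, lie_sum]
  refine Submodule.smul_mem _ _ (Submodule.sum_mem _ fun j _ => ?_)
  rw [lie_smul]
  exact Submodule.smul_mem _ _ (h i j)

end

theorem Module.Basis.alternatingMap_eq_zero_iff {R M N ι κ : Type*} [CommRing R]
    [AddCommGroup M] [Module R M] [AddCommGroup N] [Module R N] [Fintype ι] [DecidableEq ι]
    {f : M [⋀^ι]→ₗ[R] N} (b : Module.Basis κ R M) (e : ι → κ)
    (hout : ∀ v : ι → κ, ∀ i, v i ∉ Set.range e → f (b ∘ v) = 0) :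
    f = 0 ↔ f (b ∘ e) = 0 := by
  refine ⟨fun hf => by rw [hf, AlternatingMap.zero_apply], fun he => ?_⟩
  refine b.ext_alternating fun v hv => ?_
  by_cases hrange : ∀ i, v i ∈ Set.range e
  · choose τ hτ using hrange
    have hτinj : Function.Injective τ := fun i j hij => hv (by rw [← hτ i, ← hτ j, hij])
    obtain ⟨σ, rfl⟩ : ∃ σ : Equiv.Perm ι, ⇑σ = τ :=
      ⟨Equiv.ofBijective τ (Finite.injective_iff_bijective.1 hτinj), rfl⟩
    have hv' : (fun i => b (v i)) = (b ∘ e) ∘ σ := by funext i; simp [hτ]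
    rw [hv', AlternatingMap.map_perm, he, smul_zero, AlternatingMap.zero_apply]
  · push Not at hrange
    obtain ⟨i, hi⟩ := hrange
    exact hout v i hi

section FirstFamily

variable {g : Type*} [LieRing g] [LieAlgebra ℂ g]

def span34 (Z : Module.Basis (Fin 4 ⊕ Fin 4) ℂ g) : Submodule ℂ g :=
  Submodule.span ℂ (Z '' {Sum.inl 2, Sum.inl 3, Sum.inr 2, Sum.inr 3})

variable {Z : Module.Basis (Fin 4 ⊕ Fin 4) ℂ g}

lemma basis_mem_span34 {k : Fin 4 ⊕ Fin 4}
    (hk : k ∈ ({Sum.inl 2, Sum.inl 3, Sum.inr 2, Sum.inr 3} : Set (Fin 4 ⊕ Fin 4))) :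
    Z k ∈ span34 Z :=
  Submodule.subset_span (Set.mem_image_of_mem Z hk)

lemma basis_mem_span34_of_notMem_range {k : Fin 4 ⊕ Fin 4}
    (hk : k ∉ Set.range ![Sum.inl 0, Sum.inl 1, Sum.inr 0, Sum.inr 1]) : Z k ∈ span34 Z := by
  apply basis_mem_span34
  rcases k with k | k <;> fin_cases k <;> simp at hk ⊢

lemma lie_basis_central_right (hcentral : ∀ a : Fin 4 ⊕ Fin 4,
      ⁅Z (Sum.inl 2), Z a⁆ = 0 ∧ ⁅Z (Sum.inl 3), Z a⁆ = 0 ∧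
      ⁅Z (Sum.inr 2), Z a⁆ = 0 ∧ ⁅Z (Sum.inr 3), Z a⁆ = 0) (a : Fin 4 ⊕ Fin 4) :
    ⁅Z a, Z (Sum.inl 2)⁆ = 0 ∧ ⁅Z a, Z (Sum.inl 3)⁆ = 0 ∧
      ⁅Z a, Z (Sum.inr 2)⁆ = 0 ∧ ⁅Z a, Z (Sum.inr 3)⁆ = 0 := by
  simp only [← lie_skew (Z a), hcentral, neg_zero, and_self]

lemma span34_le_center (hcentral : ∀ a : Fin 4 ⊕ Fin 4,
      ⁅Z (Sum.inl 2), Z a⁆ = 0 ∧ ⁅Z (Sum.inl 3), Z a⁆ = 0 ∧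
      ⁅Z (Sum.inr 2), Z a⁆ = 0 ∧ ⁅Z (Sum.inr 3), Z a⁆ = 0) :
    span34 Z ≤ (center ℂ g).toSubmodule := by
  refine Submodule.span_le.2 ?_
  rintro _ ⟨k, hk, rfl⟩
  rcases hk with rfl | rfl | rfl | rfl <;> apply Z.mem_center_of_forall_lie_eq_zero <;>
    simp [hcentral]

lemma span34_le_comap {J : g →ₗ[ℂ] g}
    (hJ : ∀ j : Fin 4, J (Z (Sum.inl j)) = Complex.I • Z (Sum.inl j))
    (hJbar : ∀ j : Fin 4, J (Z (Sum.inr j)) = -(Complex.I • Z (Sum.inr j))) :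
    span34 Z ≤ (span34 Z).comap J := by
  refine Submodule.span_le.2 ?_
  rintro _ ⟨k, hk, rfl⟩
  have hZk := basis_mem_span34 (Z := Z) hk
  rcases hk with rfl | rfl | rfl | rfl <;>
    simp only [SetLike.mem_coe, Submodule.mem_comap, hJ, hJbar] <;>
    apply_rules [Submodule.neg_mem, Submodule.smul_mem, hZk]

lemma lie_basis_mem_span34 {B₁ B₄ B₅ C₃ C₄ F₁ F₄ F₅ G₃ G₄ : ℂ}
    (hb12 : ⁅Z (Sum.inl 0), Z (Sum.inl 1)⁆ =
      -B₁ • Z (Sum.inl 2) - F₁ • Z (Sum.inl 3))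
    (hb12conj : ⁅Z (Sum.inr 0), Z (Sum.inr 1)⁆ =
      -(starRingEnd ℂ B₁) • Z (Sum.inr 2) - (starRingEnd ℂ F₁) • Z (Sum.inr 3))
    (hb11bar : ⁅Z (Sum.inl 0), Z (Sum.inr 0)⁆ =
      -B₄ • Z (Sum.inl 2) - F₄ • Z (Sum.inl 3) +
        (starRingEnd ℂ B₄) • Z (Sum.inr 2) + (starRingEnd ℂ F₄) • Z (Sum.inr 3))
    (hb12bar : ⁅Z (Sum.inl 0), Z (Sum.inr 1)⁆ =
      -B₅ • Z (Sum.inl 2) - F₅ • Z (Sum.inl 3) +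
        (starRingEnd ℂ C₃) • Z (Sum.inr 2) + (starRingEnd ℂ G₃) • Z (Sum.inr 3))
    (hb21bar : ⁅Z (Sum.inl 1), Z (Sum.inr 0)⁆ =
      -C₃ • Z (Sum.inl 2) - G₃ • Z (Sum.inl 3) +
        (starRingEnd ℂ B₅) • Z (Sum.inr 2) + (starRingEnd ℂ F₅) • Z (Sum.inr 3))
    (hb22bar : ⁅Z (Sum.inl 1), Z (Sum.inr 1)⁆ =
      -C₄ • Z (Sum.inl 2) - G₄ • Z (Sum.inl 3) +
        (starRingEnd ℂ C₄) • Z (Sum.inr 2) + (starRingEnd ℂ G₄) • Z (Sum.inr 3))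
    (hcentral : ∀ a : Fin 4 ⊕ Fin 4,
      ⁅Z (Sum.inl 2), Z a⁆ = 0 ∧ ⁅Z (Sum.inl 3), Z a⁆ = 0 ∧
      ⁅Z (Sum.inr 2), Z a⁆ = 0 ∧ ⁅Z (Sum.inr 3), Z a⁆ = 0)
    (i j : Fin 4 ⊕ Fin 4) : ⁅Z i, Z j⁆ ∈ span34 Z := by
  rcases i with i | i <;> rcases j with j | j <;> fin_cases i <;> fin_cases j <;>
    simp [hb12, hb12conj, hb11bar, hb12bar, hb21bar, hb22bar, hcentral,
      lie_basis_central_right hcentral,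
      ← lie_skew (Z (Sum.inl 1)) (Z (Sum.inl 0)), ← lie_skew (Z (Sum.inr 1)) (Z (Sum.inr 0)),
      ← lie_skew (Z (Sum.inr 0)) (Z (Sum.inl 0)), ← lie_skew (Z (Sum.inr 1)) (Z (Sum.inl 0)),
      ← lie_skew (Z (Sum.inr 0)) (Z (Sum.inl 1)), ← lie_skew (Z (Sum.inr 1)) (Z (Sum.inl 1))] <;>
    apply_rules [Submodule.add_mem, Submodule.sub_mem, Submodule.smul_mem, Submodule.neg_mem,
      basis_mem_span34] <;> simp

end FirstFamily

open Complex in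
/-- STATEMENT 17 (first family of 8-dimensional SKT nilpotent Lie algebras), formulated on
the complexification: `g` is the complexified Lie algebra with basis
`Z₁,…,Z₄` (`Z (Sum.inl j)`) and `Z̄₁,…,Z̄₄` (`Z (Sum.inr j)`), whose only nonzero brackets
(up to antisymmetry and conjugation) are the ones listed; `J` is the (ℂ-linear extension of
the) complex structure acting as `i` on the `Zⱼ` and `−i` on the `Z̄ⱼ`, and `B` is the
ℂ-bilinear extension of the `J`-compatible inner product making `{Z₁,…,Z₄}` a unitary basis.
Then `(J, B)` is SKT (its Bismut torsion 3-form is closed) iff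
`|B₁|² + |F₁|² + |G₃|² + |B₅|² + |C₃|² + |F₅|² = 2 Re(C₄ B̄₄ + F₄ Ḡ₄)`. -/
theorem first_family_SKT_iff
    (B₁ B₄ B₅ C₃ C₄ F₁ F₄ F₅ G₃ G₄ : ℂ)
    {g : Type*} [LieRing g] [LieAlgebra ℂ g]
    (Z : Module.Basis (Fin 4 ⊕ Fin 4) ℂ g)
    (hb12 : ⁅Z (Sum.inl 0), Z (Sum.inl 1)⁆ =
      -B₁ • Z (Sum.inl 2) - F₁ • Z (Sum.inl 3))
    (hb12conj : ⁅Z (Sum.inr 0), Z (Sum.inr 1)⁆ =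
      -(starRingEnd ℂ B₁) • Z (Sum.inr 2) - (starRingEnd ℂ F₁) • Z (Sum.inr 3))
    (hb11bar : ⁅Z (Sum.inl 0), Z (Sum.inr 0)⁆ =
      -B₄ • Z (Sum.inl 2) - F₄ • Z (Sum.inl 3) +
        (starRingEnd ℂ B₄) • Z (Sum.inr 2) + (starRingEnd ℂ F₄) • Z (Sum.inr 3))
    (hb12bar : ⁅Z (Sum.inl 0), Z (Sum.inr 1)⁆ =
      -B₅ • Z (Sum.inl 2) - F₅ • Z (Sum.inl 3) +
        (starRingEnd ℂ C₃) • Z (Sum.inr 2) + (starRingEnd ℂ G₃) • Z (Sum.inr 3))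
    (hb21bar : ⁅Z (Sum.inl 1), Z (Sum.inr 0)⁆ =
      -C₃ • Z (Sum.inl 2) - G₃ • Z (Sum.inl 3) +
        (starRingEnd ℂ B₅) • Z (Sum.inr 2) + (starRingEnd ℂ F₅) • Z (Sum.inr 3))
    (hb22bar : ⁅Z (Sum.inl 1), Z (Sum.inr 1)⁆ =
      -C₄ • Z (Sum.inl 2) - G₄ • Z (Sum.inl 3) +
        (starRingEnd ℂ C₄) • Z (Sum.inr 2) + (starRingEnd ℂ G₄) • Z (Sum.inr 3))
    (hcentral : ∀ a : Fin 4 ⊕ Fin 4,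
      ⁅Z (Sum.inl 2), Z a⁆ = 0 ∧ ⁅Z (Sum.inl 3), Z a⁆ = 0 ∧
      ⁅Z (Sum.inr 2), Z a⁆ = 0 ∧ ⁅Z (Sum.inr 3), Z a⁆ = 0)
    (J : g →ₗ[ℂ] g)
    (hJ : ∀ j : Fin 4, J (Z (Sum.inl j)) = Complex.I • Z (Sum.inl j))
    (hJbar : ∀ j : Fin 4, J (Z (Sum.inr j)) = -(Complex.I • Z (Sum.inr j)))
    (B : g →ₗ[ℂ] g →ₗ[ℂ] ℂ)
    (hBsymm : ∀ X Y : g, B X Y = B Y X)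
    (hBunitary : ∀ j k : Fin 4,
      B (Z (Sum.inl j)) (Z (Sum.inr k)) = if j = k then (1 / 2 : ℂ) else 0)
    (hBhol : ∀ j k : Fin 4, B (Z (Sum.inl j)) (Z (Sum.inl k)) = 0)
    (hBantihol : ∀ j k : Fin 4, B (Z (Sum.inr j)) (Z (Sum.inr k)) = 0) :
    (∀ X Y Z' W : g, dC (bismutC (fun a b => B a b) J) X Y Z' W = 0) ↔
      ‖B₁‖ ^ 2 + ‖F₁‖ ^ 2 + ‖G₃‖ ^ 2 +
          ‖B₅‖ ^ 2 + ‖C₃‖ ^ 2 + ‖F₅‖ ^ 2 =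
        2 * (C₄ * starRingEnd ℂ B₄ + F₄ * starRingEnd ℂ G₄).re := by
  have hcenter := span34_le_center hcentral
  have hJ_span := span34_le_comap hJ hJbar
  have hJ_lie : ∀ x y : g, J ⁅x, y⁆ ∈ center ℂ g := fun x y => hcenter <| hJ_span <|
    Z.lie_mem_of_forall_lie_mem
      (lie_basis_mem_span34 hb12 hb12conj hb11bar hb12bar hb21bar hb22bar hcentral) x y
  have hreduce := Z.alternatingMap_eq_zero_iff (f := dBismutC B J)
    ![Sum.inl 0, Sum.inl 1, Sum.inr 0, Sum.inr 1] fun v i hi =>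
      have hvi := basis_mem_span34_of_notMem_range hi
      dBismutC_eq_zero_of_mem_center hJ_lie (Z ∘ v) i (hcenter hvi) (hcenter (hJ_span hvi))
  have hvalue : dBismutC B J (Z ∘ ![Sum.inl 0, Sum.inl 1, Sum.inr 0, Sum.inr 1]) =
      -(((‖B₁‖ ^ 2 + ‖F₁‖ ^ 2 + ‖G₃‖ ^ 2 + ‖B₅‖ ^ 2 + ‖C₃‖ ^ 2 + ‖F₅‖ ^ 2 -
        2 * (C₄ * starRingEnd ℂ B₄ + F₄ * starRingEnd ℂ G₄).re : ℝ) : ℂ)) := by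
    push_cast
    rw [Complex.re_eq_add_conj]
    simp only [← Complex.mul_conj']
    simp [dBismutC_apply, dC, bismutC, hJ, hJbar, hb12, hb12conj, hb11bar, hb12bar, hb21bar,
      hb22bar, hcentral, lie_basis_central_right hcentral, hBunitary, hBhol,
      fun j k => (hBsymm (Z (Sum.inr j)) (Z (Sum.inl k))).trans (hBunitary k j),
      hBantihol]
    ring_nf
    simp only [Complex.I_sq]
    ring
  rw [forall_dC_bismutC_eq_zero_iff, hreduce, hvalue, neg_eq_zero, Complex.ofReal_eq_zero,
    sub_eq_zero]
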